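/- arXiv:math/0703314 — 2 statements merged into one kernel-verified Lean document; each statement's English description precedes it below -/
import Mathlib

section
/- Let G be a group, H a subgroup of G of finite index, and N(H) = ⋂_{g ∈ G} g⁻¹Hg the normal core of H in G. Then G is not icc if and only if either (i) H is not icc, or (ii) there exists g ∈ G \ H with g ≠ 1 of finite order such that g⁻¹kg = k for all k ∈ N(H). -/
/-- A group is *icc* (with infinite conjugacy classes) if it is nontrivial and the
conjugacy class of every nontrivial element is infinite. -/
def IsICC (G : Type*) [Group G] : Prop :=
  Nontrivial G ∧ ∀ g : G, g ≠ 1 → {h : G | ∃ x : G, x⁻¹ * g * x = h}.Infinite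

/-!
By orbit–stabilizer, `g` has finitely many conjugates iff its centralizer has finite index; such
elements form a normal subgroup `FC(G)`, and `G` fails to be icc iff `G` is trivial or
`FC(G) ≠ 1`. As `[G : H]` is finite, `FC(H) = FC(G) ∩ H`. If `FC(G) ∩ H = 1`, then `FC(G)` meets
the normal core `N` trivially; two normal subgroups with trivial intersection commute, and every
`g ∈ FC(G)` satisfies `g ^ [G : N] ∈ N ∩ FC(G) = 1`. Conversely, an element centralizing `N` has a
centralizer of finite index.
-/

open Subgroup MulAction

section FCCenter

variable {G : Type*} [Group G]

theorem setOf_conj_eq_orbit_conjAct (g : G) :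
    {h : G | ∃ x : G, x⁻¹ * g * x = h} = orbit (ConjAct G) g := by
  ext h
  rw [ConjAct.mem_orbit_conjAct, isConj_comm, isConj_iff]
  exact ⟨fun ⟨x, hx⟩ => ⟨x⁻¹, by simpa using hx⟩, fun ⟨c, hc⟩ => ⟨c⁻¹, by simpa using hc⟩⟩

theorem finite_orbit_conjAct_iff (g : G) :
    (orbit (ConjAct G) g).Finite ↔ (centralizer {g}).FiniteIndex := by
  have hindex : (centralizer {g}).index = (stabilizer (ConjAct G) g).index := by
    rw [centralizer_eq_comap_stabilizer]
    exact index_comap_of_surjective _ (ConjAct.toConjAct (G := G)).surjective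
  rw [finiteIndex_iff, hindex, index_stabilizer]
  exact ⟨fun hf => ((Set.ncard_pos hf).2 ⟨g, mem_orbit_self g⟩).ne', Set.finite_of_ncard_ne_zero⟩

variable (G) in
def fcCenter : Subgroup G where
  carrier := {g | (centralizer {g}).FiniteIndex}
  one_mem' := by
    change (centralizer {(1 : G)}).FiniteIndex
    rw [centralizer_eq_top_iff_subset.2 (by simp)]
    infer_instance
  mul_mem' {a b} (ha : (centralizer {a}).FiniteIndex) (hb : (centralizer {b}).FiniteIndex) :=
    finiteIndex_of_le (H := centralizer {a} ⊓ centralizer {b}) fun x ⟨hxa, hxb⟩ =>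
      mem_centralizer_singleton_iff.2 <|
        Commute.mul_right (mem_centralizer_singleton_iff.1 hxa) (mem_centralizer_singleton_iff.1 hxb)
  inv_mem' {a} (ha : (centralizer {a}).FiniteIndex) :=
    finiteIndex_of_le (H := centralizer {a}) fun x hx =>
      mem_centralizer_singleton_iff.2 (Commute.inv_right (mem_centralizer_singleton_iff.1 hx))

theorem mem_fcCenter {g : G} : g ∈ fcCenter G ↔ (centralizer {g}).FiniteIndex := Iff.rfl

instance : (fcCenter G).Normal where
  conj_mem n hn g := by
    rw [mem_fcCenter, ← finite_orbit_conjAct_iff] at hn ⊢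
    rwa [← ConjAct.toConjAct_smul, orbit_smul]

theorem not_isICC_iff : ¬ IsICC G ↔ Subsingleton G ∨ fcCenter G ≠ ⊥ := by
  simp only [IsICC, not_and_or, not_nontrivial_iff_subsingleton, not_forall, Set.not_infinite,
    setOf_conj_eq_orbit_conjAct, finite_orbit_conjAct_iff, ← mem_fcCenter, Ne, eq_bot_iff_forall,
    exists_prop, and_comm]

theorem not_isICC_of_finite [Finite G] : ¬ IsICC G := fun ⟨_, hG⟩ =>
  let ⟨g, hg⟩ := exists_ne (1 : G)
  hG g hg (Set.toFinite _)

theorem mem_fcCenter_subgroup_iff {H : Subgroup G} [H.FiniteIndex] {h : H} :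
    h ∈ fcCenter H ↔ (h : G) ∈ fcCenter G := by
  have hcentralizer : centralizer {h} = (centralizer {(h : G)}).subgroupOf H := by
    ext k
    simp [mem_subgroupOf, mem_centralizer_singleton_iff, Subtype.ext_iff]
  rw [mem_fcCenter, mem_fcCenter, hcentralizer]
  refine ⟨fun hrel => ⟨?_⟩, fun _ => inferInstance⟩
  rw [← relIndex_top_right]
  exact relIndex_ne_zero_trans hrel.index_ne_zero
    (relIndex_top_right (H := H) ▸ FiniteIndex.index_ne_zero)

theorem not_isICC_subgroup_iff (H : Subgroup G) [H.FiniteIndex] :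
    ¬ IsICC H ↔ Subsingleton H ∨ ¬ Disjoint (fcCenter G) H := by
  have hfc : fcCenter H = (fcCenter G).subgroupOf H := by
    ext h
    rw [mem_subgroupOf, mem_fcCenter_subgroup_iff]
  rw [not_isICC_iff, hfc, Ne, subgroupOf_eq_bot]

theorem isOfFinOrder_of_mem_fcCenter {N : Subgroup G} [N.Normal] [N.FiniteIndex]
    (hN : Disjoint (fcCenter G) N) {g : G} (hg : g ∈ fcCenter G) : IsOfFinOrder g :=
  isOfFinOrder_iff_pow_eq_one.2 ⟨N.index, Nat.pos_of_ne_zero FiniteIndex.index_ne_zero,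
    disjoint_def.1 hN (pow_mem hg _) (N.pow_index_mem g)⟩

end FCCenter

/-- G is not icc iff H is not icc or some torsion g ∉ H centralizes the normal core of H. -/
theorem stmt_6 {G : Type*} [Group G] (H : Subgroup G) [H.FiniteIndex] :
    ¬ IsICC G ↔
      (¬ IsICC H ∨
        ∃ g : G, g ∉ H ∧ g ≠ 1 ∧ IsOfFinOrder g ∧
          ∀ k ∈ H.normalCore, g⁻¹ * k * g = k) := by
  rw [not_isICC_subgroup_iff H]
  constructor
  · rw [not_isICC_iff]
    rintro (hG | hFC)
    · exact Or.inl (Or.inl inferInstance)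
    refine or_iff_not_imp_left.2 fun hH => ?_
    have hdisj : Disjoint (fcCenter G) H := not_not.1 (not_or.1 hH).2
    have hdisjN : Disjoint (fcCenter G) H.normalCore := hdisj.mono_right H.normalCore_le
    obtain ⟨g, hg, hg1⟩ := (fcCenter G).bot_or_exists_ne_one.resolve_left hFC
    refine ⟨g, fun hgH => hg1 (disjoint_def.1 hdisj hg hgH), hg1,
      isOfFinOrder_of_mem_fcCenter hdisjN hg, fun k hk => ?_⟩
    have hcomm := commute_of_normal_of_disjoint _ _ inferInstance inferInstance hdisjN g k hg hk
    rw [hcomm.inv_left.eq, inv_mul_cancel_right]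
  · rintro ((hH | hdisj) | ⟨g, -, hg1, -, hgN⟩)
    · have : Finite G := (finite_iff_finite_and_finiteIndex H).2 ⟨inferInstance, inferInstance⟩
      exact not_isICC_of_finite
    all_goals rw [not_isICC_iff]; refine Or.inr fun hbot => ?_
    · exact hdisj (hbot ▸ disjoint_bot_left)
    · have hcentral : H.normalCore ≤ centralizer {g} := fun k hk =>
        mem_centralizer_singleton_iff.2 (by simpa [mul_assoc, inv_mul_eq_iff_eq_mul] using hgN k hk)
      have hg : g ∈ fcCenter G := finiteIndex_of_le hcentral
      exact hg1 (mem_bot.1 (hbot ▸ hg))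
end

section
/- Let G be a group and H a subgroup of G of finite index such that every element of G \ H has infinite order (in particular this holds when G is torsion-free and H is proper, or whenever G \ H contains no torsion element). Then G is icc if and only if H is icc. -/
open Subgroup MulAction

section

variable {G : Type*} [Group G]

theorem infinite_conj_iff_index_centralizer_eq_zero (g : G) :
    {h : G | ∃ x : G, x⁻¹ * g * x = h}.Infinite ↔ (centralizer {g}).index = 0 := by
  have horbit : {h : G | ∃ x : G, x⁻¹ * g * x = h} = orbit (ConjAct G) g := by
    ext h
    simp only [Set.mem_ofPred_eq, ConjAct.mem_orbit_conjAct, isConj_comm (g := h), isConj_iff]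
    exact ⟨fun ⟨x, hx⟩ => ⟨x⁻¹, by simpa using hx⟩, fun ⟨x, hx⟩ => ⟨x⁻¹, by simpa using hx⟩⟩
  rw [horbit, ← Set.infinite_coe_iff, index_eq_zero_iff_infinite]
  exact ((orbitEquivQuotientStabilizer _ g).trans
    (quotientEquivOfEq (ConjAct.stabilizer_eq_centralizer g))).infinite_iff

theorem isICC_iff_index_centralizer :
    IsICC G ↔ Nontrivial G ∧ ∀ g : G, g ≠ 1 → (centralizer {g}).index = 0 := by
  simp only [IsICC, infinite_conj_iff_index_centralizer_eq_zero]

theorem index_centralizer_eq_zero_of_pow {g : G} (n : ℕ)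
    (h : (centralizer {g ^ n}).index = 0) : (centralizer {g}).index = 0 :=
  eq_zero_of_zero_dvd <| h ▸ index_dvd_of_le fun _ hx =>
    mem_centralizer_singleton_iff.mpr <|
      Commute.pow_right (mem_centralizer_singleton_iff.mp hx) n

theorem centralizer_singleton_subgroupOf (H : Subgroup G) (h : H) :
    centralizer {h} = (centralizer {(h : G)}).subgroupOf H := by
  ext x
  simp only [mem_centralizer_singleton_iff, mem_subgroupOf, Subtype.ext_iff, coe_mul]

theorem relIndex_eq_zero_iff_index_eq_zero (K H : Subgroup G) [H.FiniteIndex] :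
    K.relIndex H = 0 ↔ K.index = 0 := by
  refine ⟨index_eq_zero_of_relIndex_eq_zero, fun hK => ?_⟩
  by_contra hKH
  rw [← relIndex_top_right] at hK
  exact relIndex_ne_zero_trans hKH (H.relIndex_top_right ▸ FiniteIndex.index_ne_zero) hK

theorem index_centralizer_subgroup_eq_zero_iff (H : Subgroup G) [H.FiniteIndex] (h : H) :
    (centralizer {h}).index = 0 ↔ (centralizer {(h : G)}).index = 0 := by
  rw [centralizer_singleton_subgroupOf, ← relIndex, relIndex_eq_zero_iff_index_eq_zero]

theorem infinite_of_index_eq_zero {K : Subgroup G} (hK : K.index = 0) : Infinite G :=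
  not_finite_iff_infinite.mp fun _ => index_ne_zero_of_finite hK

theorem infinite_of_finiteIndex [Infinite G] (H : Subgroup G) [H.FiniteIndex] : Infinite H :=
  not_finite_iff_infinite.mp fun hH =>
    ((finite_iff_finite_and_finiteIndex H).mpr ⟨hH, ‹_›⟩).false

theorem exists_pow_mem_ne_one (H : Subgroup G) [H.FiniteIndex]
    (htor : ∀ g : G, g ∉ H → ¬ IsOfFinOrder g) {g : G} (hg : g ≠ 1) :
    ∃ n : ℕ, g ^ n ∈ H ∧ g ^ n ≠ 1 := by
  by_cases hgH : g ∈ H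
  · exact ⟨1, by simpa using hgH, by simpa using hg⟩
  obtain ⟨n, hn, -, hgn⟩ :=
    exists_pow_mem_of_index_ne_zero (FiniteIndex.index_ne_zero (H := H)) g
  exact ⟨n, hgn, fun h1 => htor g hgH (isOfFinOrder_iff_pow_eq_one.mpr ⟨n, hn, h1⟩)⟩

end

/-- Corollary 2: if every element of G \ H has infinite order, then G is icc iff H is. -/
theorem stmt_12 {G : Type*} [Group G] (H : Subgroup G) [H.FiniteIndex]
    (htor : ∀ g : G, g ∉ H → ¬ IsOfFinOrder g) :
    IsICC G ↔ IsICC H := by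
  simp only [isICC_iff_index_centralizer, index_centralizer_subgroup_eq_zero_iff]
  constructor
  · rintro ⟨hGnt, hG⟩
    obtain ⟨g, hg⟩ := exists_ne (1 : G)
    have : Infinite G := infinite_of_index_eq_zero (hG g hg)
    have : Infinite H := infinite_of_finiteIndex H
    exact ⟨inferInstance, fun h hh => hG h (by simpa using hh)⟩
  · rintro ⟨hH, hcent⟩
    obtain ⟨h, hh⟩ := exists_ne (1 : H)
    refine ⟨⟨h, 1, by simpa using hh⟩, fun g hg => ?_⟩
    obtain ⟨n, hgnH, hgn⟩ := exists_pow_mem_ne_one H htor hg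
    exact index_centralizer_eq_zero_of_pow n (hcent ⟨_, hgnH⟩ (by simpa using hgn))
end
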